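/- For every nonnegative integer k and complex parameters a, b for which all gamma functions below are defined, the finite sum identity holds: Σ_{n=0}^{k} (−1)^n Γ(a+n−1/2) / (n! (k−n)! Γ(a+n+k+1/2)) · (a+2n−1/2) / (b(b−1) − (a+2n)(a+2n−1)) = −(1/4) Γ((a−b)/2) Γ((a+b−1)/2) / (Γ((a−b)/2 + k + 1) Γ((a+b+1)/2 + k)). -/

import Mathlib

/-!
Put `x = (a - b) / 2` and `y = (a + b - 1) / 2`. Then `a - 1/2 = x + y` and
`b (b - 1) - (a + 2n) (a + 2n - 1) = -4 (x + n) (y + n)`, so up to the factor `-1/4` the identity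
says that `∑ₙ (-1)ⁿ Γ(x+y+n) (x+y+2n) / (n! (k-n)! Γ(x+y+n+k+1) (x+n) (y+n))` equals
`Γ(x) Γ(y) / (Γ(x+k+1) Γ(y+k+1))`. The right side gets multiplied by `(x+k+1)(y+k+1)` when `k`
drops by one, and so does the sum, by creative telescoping: multiplied by that factor, each term
of the sum for `k + 1` is the term for `k` plus a difference `G(n+1) - G(n)` of an explicit
certificate, so the identity follows by induction on `k`.
-/

open Complex Finset Nat

namespace Complex

variable {z : ℂ}

lemma add_natCast_ne_neg_natCast (hz : ∀ m : ℕ, z ≠ -m) (j m : ℕ) : z + j ≠ -m := fun h ↦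
  hz (m + j) (by push_cast; linear_combination h)

lemma add_natCast_ne_zero (hz : ∀ m : ℕ, z ≠ -m) (j : ℕ) : z + j ≠ 0 := by
  simpa using add_natCast_ne_neg_natCast hz j 0

lemma Gamma_add_natCast_ne_zero (hz : ∀ m : ℕ, z ≠ -m) (j : ℕ) : Gamma (z + j) ≠ 0 :=
  Gamma_ne_zero (add_natCast_ne_neg_natCast hz j)

lemma Gamma_add_natCast_succ (hz : ∀ m : ℕ, z ≠ -m) (j : ℕ) :
    Gamma (z + (j + 1 : ℕ)) = (z + j) * Gamma (z + j) := by
  rw [Nat.cast_succ, ← add_assoc, Gamma_add_one _ (add_natCast_ne_zero hz j)]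

end Complex

namespace UsefulIdentity

noncomputable def summand (x y : ℂ) (k n : ℕ) : ℂ :=
  (-1) ^ n * Gamma (x + y + n) * (x + y + 2 * n) /
    (n ! * (k - n)! * Gamma (x + y + (n + k + 1 : ℕ)) * ((x + n) * (y + n)))

noncomputable def certificate (x y : ℂ) (k n : ℕ) : ℂ :=
  -((-1) ^ n * n * Gamma (x + y + n)) /
    ((k + 1) * n ! * (k + 1 - n)! * Gamma (x + y + (n + k + 1 : ℕ)))

variable {x y : ℂ}

lemma mul_summand_succ (hs : ∀ m : ℕ, x + y ≠ -m) (hx : ∀ m : ℕ, x ≠ -m)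
    (hy : ∀ m : ℕ, y ≠ -m) {k n : ℕ} (hn : n ≤ k) :
    (x + k + 1) * (y + k + 1) * summand x y (k + 1) n
      = summand x y k n + (certificate x y k (n + 1) - certificate x y k n) := by
  obtain ⟨j, rfl⟩ := Nat.exists_eq_add_of_le hn
  have hsk := add_natCast_ne_zero hs (n + (n + j) + 1)
  have hG := Gamma_add_natCast_ne_zero hs (n + (n + j) + 1)
  have hxn := add_natCast_ne_zero hx n
  have hyn := add_natCast_ne_zero hy n
  have hk : (n : ℂ) + j + 1 ≠ 0 := by exact_mod_cast (n + j).succ_ne_zero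
  have hn1 : (n : ℂ) + 1 ≠ 0 := by exact_mod_cast n.succ_ne_zero
  have hj1 : (j : ℂ) + 1 ≠ 0 := by exact_mod_cast j.succ_ne_zero
  have hnf : (n ! : ℂ) ≠ 0 := by exact_mod_cast n.factorial_ne_zero
  have hjf : (j ! : ℂ) ≠ 0 := by exact_mod_cast j.factorial_ne_zero
  rw [summand, summand, certificate, certificate,
    show n + (n + j + 1) + 1 = n + (n + j) + 1 + 1 by omega,
    show n + 1 + (n + j) + 1 = n + (n + j) + 1 + 1 by omega,
    show n + j + 1 - n = j + 1 by omega, show n + j + 1 - (n + 1) = j by omega,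
    Nat.add_sub_cancel_left, Gamma_add_natCast_succ hs (n + (n + j) + 1),
    Gamma_add_natCast_succ hs n, factorial_succ, factorial_succ]
  -- otherwise `push_cast` rewrites the argument of `Γ` and `hG` no longer matches the goal
  generalize Gamma (x + y + (n + (n + j) + 1 : ℕ)) = G at *
  push_cast at *
  field_simp
  ring

lemma mul_summand_succ_succ (hs : ∀ m : ℕ, x + y ≠ -m) (hx : ∀ m : ℕ, x ≠ -m)
    (hy : ∀ m : ℕ, y ≠ -m) (k : ℕ) :
    (x + k + 1) * (y + k + 1) * summand x y (k + 1) (k + 1) = -certificate x y k (k + 1) := by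
  have hsk := add_natCast_ne_zero hs (k + 1 + k + 1)
  have hG := Gamma_add_natCast_ne_zero hs (k + 1 + k + 1)
  have hxk := add_natCast_ne_zero hx (k + 1)
  have hyk := add_natCast_ne_zero hy (k + 1)
  have hk : (k : ℂ) + 1 ≠ 0 := by exact_mod_cast k.succ_ne_zero
  rw [summand, certificate, Nat.sub_self,
    show k + 1 + (k + 1) + 1 = k + 1 + k + 1 + 1 by omega,
    Gamma_add_natCast_succ hs (k + 1 + k + 1)]
  generalize Gamma (x + y + (k + 1 + k + 1 : ℕ)) = G at *
  push_cast at *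
  field_simp
  ring

lemma mul_sum_summand_succ (hs : ∀ m : ℕ, x + y ≠ -m) (hx : ∀ m : ℕ, x ≠ -m)
    (hy : ∀ m : ℕ, y ≠ -m) (k : ℕ) :
    (x + k + 1) * (y + k + 1) * ∑ n ∈ range (k + 2), summand x y (k + 1) n
      = ∑ n ∈ range (k + 1), summand x y k n := by
  rw [mul_sum, sum_range_succ, mul_summand_succ_succ hs hx hy,
    sum_congr rfl fun n hn ↦ mul_summand_succ hs hx hy (Nat.lt_succ_iff.mp (mem_range.mp hn)),
    sum_add_distrib, sum_range_sub (certificate x y k)]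
  simp [certificate]

lemma Gamma_ratio_succ (hx : ∀ m : ℕ, x ≠ -m) (hy : ∀ m : ℕ, y ≠ -m) (k : ℕ) :
    Gamma x * Gamma y / (Gamma (x + (k + 1 : ℕ)) * Gamma (y + (k + 1 : ℕ)))
      = (x + k + 1) * (y + k + 1) *
        (Gamma x * Gamma y / (Gamma (x + (k + 1 + 1 : ℕ)) * Gamma (y + (k + 1 + 1 : ℕ)))) := by
  have hxk := add_natCast_ne_zero hx (k + 1)
  have hyk := add_natCast_ne_zero hy (k + 1)
  have hΓx := Gamma_add_natCast_ne_zero hx (k + 1)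
  have hΓy := Gamma_add_natCast_ne_zero hy (k + 1)
  rw [Gamma_add_natCast_succ hx (k + 1), Gamma_add_natCast_succ hy (k + 1)]
  push_cast at *
  field_simp
  ring

theorem sum_summand (hs : ∀ m : ℕ, x + y ≠ -m) (hx : ∀ m : ℕ, x ≠ -m)
    (hy : ∀ m : ℕ, y ≠ -m) (k : ℕ) :
    ∑ n ∈ range (k + 1), summand x y k n
      = Gamma x * Gamma y / (Gamma (x + (k + 1 : ℕ)) * Gamma (y + (k + 1 : ℕ))) := by
  induction k with
  | zero =>
    have hs0 : x + y ≠ 0 := by simpa using hs 0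
    have hx0 : x ≠ 0 := by simpa using hx 0
    have hy0 : y ≠ 0 := by simpa using hy 0
    simp only [zero_add, range_one, summand, zero_tsub, factorial_zero, cast_one, mul_one, add_zero,
      cast_add, sum_singleton, pow_zero, CharP.cast_eq_zero, one_mul, mul_zero,
      Gamma_add_one _ hs0, Gamma_add_one _ hx0, Gamma_add_one _ hy0]
    field_simp [Gamma_ne_zero hs, Gamma_ne_zero hx, Gamma_ne_zero hy]
  | succ k ih =>
    have hxk := add_natCast_ne_zero hx (k + 1)
    have hyk := add_natCast_ne_zero hy (k + 1)
    push_cast at hxk hyk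
    refine mul_left_cancel₀ (mul_ne_zero hxk hyk) ?_
    rw [← add_assoc, ← add_assoc, mul_sum_summand_succ hs hx hy, ih, Gamma_ratio_succ hx hy]

end UsefulIdentity

theorem useful_identity_general (k : ℕ) (a b : ℂ)
    (ha : ∀ m : ℕ, a - 1/2 ≠ -(m : ℂ))
    (hab : ∀ m : ℕ, (a - b) / 2 ≠ -(m : ℂ))
    (hab' : ∀ m : ℕ, (a + b - 1) / 2 ≠ -(m : ℂ)) :
    (∑ n ∈ Finset.range (k + 1),
        (-1 : ℂ) ^ n * Complex.Gamma (a + n - 1/2) /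
          ((n.factorial : ℂ) * ((k - n).factorial : ℂ) * Complex.Gamma (a + n + k + 1/2)) *
          ((a + 2 * n - 1/2) / (b * (b - 1) - (a + 2 * n) * (a + 2 * n - 1))))
      = -(1/4) * Complex.Gamma ((a - b) / 2) * Complex.Gamma ((a + b - 1) / 2) /
          (Complex.Gamma ((a - b) / 2 + k + 1) * Complex.Gamma ((a + b + 1) / 2 + k)) := by
  have hxy : (a - b) / 2 + (a + b - 1) / 2 = a - 1/2 := by ring
  have hs : ∀ m : ℕ, (a - b) / 2 + (a + b - 1) / 2 ≠ -m := hxy ▸ ha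
  have hterm : ∀ n ∈ range (k + 1),
      (-1 : ℂ) ^ n * Gamma (a + n - 1/2) / (n ! * (k - n)! * Gamma (a + n + k + 1/2)) *
          ((a + 2 * n - 1/2) / (b * (b - 1) - (a + 2 * n) * (a + 2 * n - 1)))
        = -(1/4) * UsefulIdentity.summand ((a - b) / 2) ((a + b - 1) / 2) k n := by
    intro n _
    rw [UsefulIdentity.summand, hxy, show a - 1/2 + (n : ℂ) = a + n - 1/2 by ring,
      show a - 1/2 + ((n + k + 1 : ℕ) : ℂ) = a + n + k + 1/2 by push_cast; ring,
      show b * (b - 1) - (a + 2 * n) * (a + 2 * n - 1)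
        = -4 * (((a - b) / 2 + n) * ((a + b - 1) / 2 + n)) by ring]
    -- as an atom, the product lets `ring` split the inverse `(-4 * E)⁻¹`, even where `E = 0`
    generalize ((a - b) / 2 + n) * ((a + b - 1) / 2 + n) = E
    ring
  rw [sum_congr rfl hterm, ← mul_sum, UsefulIdentity.sum_summand hs hab hab',
    show (a - b) / 2 + ((k + 1 : ℕ) : ℂ) = (a - b) / 2 + k + 1 by push_cast; ring,
    show (a + b - 1) / 2 + ((k + 1 : ℕ) : ℂ) = (a + b + 1) / 2 + k by push_cast; ring]
  ring

/-- The finite sum identity (A.16) with gamma functions. -/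
theorem useful_identity (k : ℕ) (a b : ℂ)
    (hden : ∀ n : ℕ, n ≤ k → b * (b - 1) - (a + 2 * n) * (a + 2 * n - 1) ≠ 0)
    (ha : ∀ m : ℕ, a - 1/2 ≠ -(m : ℂ))
    (hab : ∀ m : ℕ, (a - b) / 2 ≠ -(m : ℂ))
    (hab' : ∀ m : ℕ, (a + b - 1) / 2 ≠ -(m : ℂ)) :
    (∑ n ∈ Finset.range (k + 1),
        (-1 : ℂ) ^ n * Complex.Gamma (a + n - 1/2) /
          ((n.factorial : ℂ) * ((k - n).factorial : ℂ) * Complex.Gamma (a + n + k + 1/2)) *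
          ((a + 2 * n - 1/2) / (b * (b - 1) - (a + 2 * n) * (a + 2 * n - 1))))
      = -(1/4) * Complex.Gamma ((a - b) / 2) * Complex.Gamma ((a + b - 1) / 2) /
          (Complex.Gamma ((a - b) / 2 + k + 1) * Complex.Gamma ((a + b + 1) / 2 + k)) :=
  useful_identity_general k a b ha hab hab'
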